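/- (Main theorem) Let S = Δ^{n_1-1} × ... × Δ^{n_B-1} and let f be convex, continuous, and differentiable on S (i.e., on an open set containing S). Let U = (u_1,...,u_B) ∈ S with every coordinate of every block strictly positive. Let δ_{j,k} = s_j/ρ^k for k ∈ ℕ, s_j > 0, ρ > 1. For each block j and index i, define u^{(i+)}_{j,k} by adding δ_{j,k} to coordinate i of u_j and subtracting δ_{j,k}/(n_j - 1) from all other coordinates of u_j, and u^{(i-)}_{j,k} symmetrically. If for all k, whenever u^{(i+)}_{j,k}, u^{(i-)}_{j,k} ∈ Δ^{n_j-1}, we have f(U) ≤ f(u_1,...,u_{j-1}, u^{(i+)}_{j,k}, u_{j+1},...,u_B) and f(U) ≤ f(u_1,...,u_{j-1}, u^{(i-)}_{j,k}, u_{j+1},...,u_B), then U is a global minimum of f on S. -/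
import Mathlib

theorem gcdvsms_main_theorem
    (B : ℕ) (n : Fin B → ℕ) (hn : ∀ j, 2 ≤ n j)
    (f : ((j : Fin B) → Fin (n j) → ℝ) → ℝ)
    (V : Set ((j : Fin B) → Fin (n j) → ℝ))
    (hVopen : IsOpen V)
    (hSV : {P : (j : Fin B) → Fin (n j) → ℝ | ∀ j, P j ∈ stdSimplex ℝ (Fin (n j))} ⊆ V)
    (hconv : ConvexOn ℝ V f)
    (hcont : ContinuousOn f V)
    (hdiff : DifferentiableOn ℝ f V)
    (U : (j : Fin B) → Fin (n j) → ℝ)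
    (hU : ∀ j, U j ∈ stdSimplex ℝ (Fin (n j)))
    (hpos : ∀ j i, 0 < U j i)
    (s : Fin B → ℝ) (hs : ∀ j, 0 < s j) (ρ : ℝ) (hρ : 1 < ρ)
    (hmin : ∀ (j : Fin B) (i : Fin (n j)) (k : ℕ),
      (fun l => if l = i then U j l + s j / ρ ^ k
                else U j l - (s j / ρ ^ k) / ((n j : ℝ) - 1)) ∈ stdSimplex ℝ (Fin (n j)) →
      (fun l => if l = i then U j l - s j / ρ ^ k
                else U j l + (s j / ρ ^ k) / ((n j : ℝ) - 1)) ∈ stdSimplex ℝ (Fin (n j)) →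
      f U ≤ f (Function.update U j
        (fun l => if l = i then U j l + s j / ρ ^ k
                  else U j l - (s j / ρ ^ k) / ((n j : ℝ) - 1))) ∧
      f U ≤ f (Function.update U j
        (fun l => if l = i then U j l - s j / ρ ^ k
                  else U j l + (s j / ρ ^ k) / ((n j : ℝ) - 1)))) :
    ∀ X ∈ {P : (j : Fin B) → Fin (n j) → ℝ | ∀ j, P j ∈ stdSimplex ℝ (Fin (n j))},
      f U ≤ f X := by
  intro X hX
  have hUV : U ∈ V := hSV hU
  have hXV : X ∈ V := hSV hX
  have hL : HasFDerivAt f (fderiv ℝ f U) U :=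
    ((hdiff U hUV).differentiableAt (hVopen.mem_nhds hUV)).hasFDerivAt
  set L := fderiv ℝ f U with hLdef
  -- directions
  set D : (j : Fin B) → Fin (n j) → ((j : Fin B) → Fin (n j) → ℝ) :=
    fun j i => Function.update (0 : (j : Fin B) → Fin (n j) → ℝ) j
      (fun l => if l = i then 1 else -1/((n j : ℝ)-1)) with hD
  -- cast facts
  have hn1 : ∀ j : Fin B, (1:ℝ) ≤ (n j : ℝ) - 1 := by
    intro j
    have := hn j
    have : (2:ℝ) ≤ (n j : ℝ) := by exact_mod_cast this
    linarith
  have hn1ne : ∀ j : Fin B, ((n j : ℝ) - 1) ≠ 0 := fun j => by linarith [hn1 j]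
  have hnne : ∀ j : Fin B, ((n j : ℝ)) ≠ 0 := fun j => by linarith [hn1 j]
  -- the sequence δ k for block j
  have hρ0 : (0:ℝ) < ρ := lt_trans one_pos hρ
  have hato : ∀ j : Fin B, Filter.Tendsto (fun k : ℕ => s j / ρ ^ k) Filter.atTop (nhds 0) := by
    intro j
    have h1 : |1/ρ| < 1 := by
      rw [abs_of_pos (by positivity)]
      rw [div_lt_one hρ0]; exact hρ
    have := tendsto_pow_atTop_nhds_zero_of_abs_lt_one h1
    have h2 := this.const_mul (s j)
    simp only [mul_zero] at h2
    convert h2 using 2 with k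
    rw [div_pow, one_pow, mul_one_div]
  have hapos : ∀ (j : Fin B) (k : ℕ), 0 < s j / ρ ^ k := fun j k => div_pos (hs j) (pow_pos hρ0 k)
  -- key: derivative in each direction is 0
  have hkey : ∀ (j : Fin B) (i : Fin (n j)), L (D j i) = 0 := by
    intro j i
    have hne : Nonempty (Fin (n j)) := ⟨⟨0, by have := hn j; omega⟩⟩
    set m : ℝ := Finset.univ.inf' (Finset.univ_nonempty) (U j) with hm
    have hmpos : 0 < m := by
      rw [hm, Finset.lt_inf'_iff]
      exact fun l _ => hpos j l
    -- eventually δ k ≤ m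
    have hev : ∀ᶠ k in Filter.atTop, s j / ρ ^ k ≤ m :=
      (hato j).eventually (eventually_le_nhds hmpos)
    -- membership and inequalities for δ ≤ m
    have hboth : ∀ k : ℕ, s j / ρ ^ k ≤ m →
        f U ≤ f (U + (s j / ρ ^ k) • D j i) ∧ f U ≤ f (U + (-(s j / ρ ^ k)) • D j i) := by
      intro k hk
      set δ := s j / ρ ^ k with hδ
      have hδ0 : 0 < δ := hapos j k
      have hmle : ∀ l, m ≤ U j l := fun l => Finset.inf'_le _ (Finset.mem_univ l)
      have hδle : ∀ l, δ ≤ U j l := fun l => le_trans hk (hmle l)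
      have hδdiv : δ / ((n j : ℝ) - 1) ≤ δ := by
        apply div_le_self hδ0.le (hn1 j)
      -- sum fact
      have hsum : ∀ (c : ℝ), ∑ l : Fin (n j), (if l = i then U j l + c
          else U j l - c / ((n j : ℝ) - 1)) = 1 := by
        intro c
        have : ∀ l, (if l = i then U j l + c else U j l - c / ((n j : ℝ) - 1))
            = U j l + (if l = i then c else -(c / ((n j : ℝ) - 1))) := by
          intro l; split <;> ring
        simp only [this, Finset.sum_add_distrib, (hU j).2]
        have : ∑ l : Fin (n j), (if l = i then c else -(c / ((n j : ℝ) - 1)))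
            = c + ∑ l ∈ Finset.univ.erase i, -(c / ((n j : ℝ) - 1)) := by
          rw [← Finset.add_sum_erase _ _ (Finset.mem_univ i)]
          simp only [if_pos rfl]
          congr 1
          apply Finset.sum_congr rfl
          intro l hl
          rw [if_neg (Finset.mem_erase.mp hl).1]
        rw [this, Finset.sum_const, Finset.card_erase_of_mem (Finset.mem_univ i)]
        simp only [Finset.card_univ, Fintype.card_fin, nsmul_eq_mul]
        have hcast : ((n j - 1 : ℕ) : ℝ) = (n j : ℝ) - 1 := by
          have h2 := hn j
          rw [Nat.cast_sub (by omega : 1 ≤ n j), Nat.cast_one]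
        rw [hcast]
        field_simp [hn1ne j]
        ring
      have hplusmem : (fun l => if l = i then U j l + δ
          else U j l - δ / ((n j : ℝ) - 1)) ∈ stdSimplex ℝ (Fin (n j)) := by
        constructor
        · intro l
          by_cases h : l = i
          · simp only [if_pos h]; linarith [hpos j l]
          · simp only [if_neg h]
            have := hδle l
            have := hδdiv
            linarith
        · exact hsum δ
      have hminusmem : (fun l => if l = i then U j l - δ
          else U j l + δ / ((n j : ℝ) - 1)) ∈ stdSimplex ℝ (Fin (n j)) := by
        constructor
        · intro l
          by_cases h : l = i
          · simp only [if_pos h]; linarith [hδle l]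
          · simp only [if_neg h]
            have h1 : 0 < δ / ((n j : ℝ) - 1) := by
              apply div_pos hδ0; linarith [hn1 j]
            linarith [hpos j l]
        · have h := hsum (-δ)
          have he : ∀ l : Fin (n j), (if l = i then U j l - δ
              else U j l + δ / ((n j : ℝ) - 1))
              = (if l = i then U j l + -δ else U j l - -δ / ((n j : ℝ) - 1)) := by
            intro l; split_ifs <;> ring
          simp only [he]
          exact h
      have hres := hmin j i k hplusmem hminusmem
      -- rewrite updates as U + δ • D
      have hplus_eq : Function.update U j (fun l => if l = i then U j l + δ
          else U j l - δ / ((n j : ℝ) - 1)) = U + δ • D j i := by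
        funext j' l
        by_cases h : j' = j
        · subst h
          simp only [hD, Function.update_self, Pi.add_apply, Pi.smul_apply, smul_eq_mul]
          split_ifs <;> ring
        · simp only [hD, Function.update_of_ne h, Pi.add_apply, Pi.smul_apply,
            Pi.zero_apply, smul_eq_mul, mul_zero, add_zero]
      have hminus_eq : Function.update U j (fun l => if l = i then U j l - δ
          else U j l + δ / ((n j : ℝ) - 1)) = U + (-δ) • D j i := by
        funext j' l
        by_cases h : j' = j
        · subst h
          simp only [hD, Function.update_self, Pi.add_apply, Pi.smul_apply, smul_eq_mul]
          split_ifs <;> ring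
        · simp only [hD, Function.update_of_ne h, Pi.add_apply, Pi.smul_apply,
            Pi.zero_apply, smul_eq_mul, mul_zero, add_zero]
      rw [hplus_eq, hminus_eq] at hres
      exact hres
    -- derivative of φ t = f (U + t • D j i) at 0
    have hγ : HasDerivAt (fun t : ℝ => U + t • D j i) (D j i) 0 := by
      have h1 : HasDerivAt (fun t : ℝ => t • D j i) ((1:ℝ) • D j i) 0 :=
        (hasDerivAt_id (0:ℝ)).smul_const (D j i)
      simpa using h1.const_add U
    have hφ : HasDerivAt (fun t : ℝ => f (U + t • D j i)) (L (D j i)) 0 := by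
      have hL' : HasFDerivAt f L (U + (0:ℝ) • D j i) := by simpa using hL
      exact hL'.comp_hasDerivAt 0 hγ
    have hslope := hasDerivAt_iff_tendsto_slope.mp hφ
    -- positive sequence
    have haseq : Filter.Tendsto (fun k : ℕ => s j / ρ ^ k) Filter.atTop (nhdsWithin 0 {(0:ℝ)}ᶜ) := by
      apply Filter.Tendsto.mono_right _ le_rfl
      apply tendsto_nhdsWithin_of_tendsto_nhds_of_eventually_within _ (hato j)
      exact Filter.Eventually.of_forall fun k => (hapos j k).ne'
    have hnegseq : Filter.Tendsto (fun k : ℕ => -(s j / ρ ^ k)) Filter.atTop (nhdsWithin 0 {(0:ℝ)}ᶜ) := by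
      apply tendsto_nhdsWithin_of_tendsto_nhds_of_eventually_within
      · simpa using (hato j).neg
      · exact Filter.Eventually.of_forall fun k => by simpa using (hapos j k).ne'
    have hge : 0 ≤ L (D j i) := by
      apply ge_of_tendsto (hslope.comp haseq)
      filter_upwards [hev] with k hk
      have h := (hboth k hk).1
      simp only [Function.comp_apply, slope_def_field, sub_zero, zero_smul, add_zero]
      exact div_nonneg (by linarith) (hapos j k).le
    have hle : L (D j i) ≤ 0 := by
      apply le_of_tendsto (hslope.comp hnegseq)
      filter_upwards [hev] with k hk
      have h := (hboth k hk).2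
      simp only [Function.comp_apply, slope_def_field, sub_zero, zero_smul, add_zero]
      apply div_nonpos_of_nonneg_of_nonpos (by linarith)
      linarith [hapos j k]
    linarith
  -- decomposition of X - U
  have hsumzero : ∀ j : Fin B, ∑ i, (X j i - U j i) = 0 := by
    intro j
    rw [Finset.sum_sub_distrib, (hX j).2, (hU j).2, sub_self]
  have hdecomp : X - U = ∑ j : Fin B, ∑ i : Fin (n j),
      ((((n j : ℝ) - 1) / (n j)) * (X j i - U j i)) • D j i := by
    funext j' l
    simp only [Pi.sub_apply, Finset.sum_apply, Pi.smul_apply, smul_eq_mul]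
    rw [Finset.sum_eq_single j']
    · have hDj : ∀ (i l' : Fin (n j')), D j' i j' l'
          = if l' = i then 1 else -1/((n j' : ℝ)-1) := by
        intro i l'; simp [hD]
      simp only [hDj]
      have hsplit : ∑ i : Fin (n j'),
          ((((n j' : ℝ)-1)/(n j' : ℝ)) * (X j' i - U j' i)) * (if l = i then 1 else -1/((n j' : ℝ)-1))
          = ((((n j' : ℝ)-1)/(n j' : ℝ)) * (X j' l - U j' l)) * 1
            + ∑ i ∈ Finset.univ.erase l,
              ((((n j' : ℝ)-1)/(n j' : ℝ)) * (X j' i - U j' i)) * (-1/((n j' : ℝ)-1)) := by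
        rw [← Finset.add_sum_erase _ _ (Finset.mem_univ l)]
        simp only [if_pos rfl]
        congr 1
        apply Finset.sum_congr rfl
        intro i hi
        rw [if_neg (Ne.symm (Finset.mem_erase.mp hi).1)]
      rw [hsplit, ← Finset.sum_mul, ← Finset.mul_sum]
      have herase : ∑ i ∈ Finset.univ.erase l, (X j' i - U j' i) = -(X j' l - U j' l) := by
        have h0 := hsumzero j'
        rw [← Finset.add_sum_erase _ _ (Finset.mem_univ l)] at h0
        linarith
      rw [herase]
      field_simp [hn1ne j', hnne j']
      ring
    · intro b _ hb
      apply Finset.sum_eq_zero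
      intro i _
      simp [hD, Function.update_of_ne (Ne.symm hb)]
    · intro h; exact absurd (Finset.mem_univ j') h
  have hLXU : L (X - U) = 0 := by
    rw [hdecomp, map_sum]
    apply Finset.sum_eq_zero; intro j _
    rw [map_sum]
    apply Finset.sum_eq_zero; intro i _
    rw [map_smul, hkey j i, smul_zero]
  -- convexity argument
  have hγX : HasDerivAt (fun t : ℝ => U + t • (X - U)) (X - U) 0 := by
    have h1 : HasDerivAt (fun t : ℝ => t • (X - U)) ((1:ℝ) • (X - U)) 0 :=
      (hasDerivAt_id (0:ℝ)).smul_const _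
    simpa using h1.const_add U
  have hg : HasDerivAt (fun t : ℝ => f (U + t • (X - U))) (L (X - U)) 0 := by
    have hL' : HasFDerivAt f L (U + (0:ℝ) • (X - U)) := by simpa using hL
    exact hL'.comp_hasDerivAt 0 hγX
  have hslopeg := hasDerivAt_iff_tendsto_slope.mp hg
  have hmono : Filter.Tendsto (slope (fun t : ℝ => f (U + t • (X - U))) 0)
      (nhdsWithin 0 (Set.Ioi 0)) (nhds (L (X - U))) :=
    hslopeg.mono_left (nhdsWithin_mono _ (fun t ht => ne_of_gt ht))
  have hfinal : L (X - U) ≤ f X - f U := by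
    apply le_of_tendsto hmono
    filter_upwards [Ioo_mem_nhdsGT_of_mem
      (Set.mem_Ico.mpr ⟨le_refl (0:ℝ), zero_lt_one⟩)] with t ht
    have hc := hconv.2 hUV hXV (by linarith [ht.2] : (0:ℝ) ≤ 1 - t) (le_of_lt ht.1)
      (by ring : (1 - t) + t = 1)
    have heq : (1 - t) • U + t • X = U + t • (X - U) := by
      funext j l
      simp only [Pi.add_apply, Pi.smul_apply, Pi.sub_apply, smul_eq_mul]
      ring
    rw [heq] at hc
    simp only [smul_eq_mul] at hc
    rw [slope_def_field]
    simp only [sub_zero, zero_smul, add_zero]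
    rw [div_le_iff₀ ht.1]
    nlinarith [hc]
  rw [hLXU] at hfinal
  linarith
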